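/- For every κ > 0 one has 2·α'(κ) + κ·α''(κ) < 0; that is, the function κ ↦ κ(α(κ) − 1) is strictly concave on (0,∞). -/

import Mathlib

open Real

/-- The Whitham dispersion symbol `α(ξ) = √(tanh ξ / ξ)` for `ξ ≠ 0`, with `α(0) = 1`. -/
noncomputable def whithamSymbol (ξ : ℝ) : ℝ :=
  if ξ = 0 then 1 else Real.sqrt (Real.tanh ξ / ξ)

/-- `tanh x / x = sinh x / (x * cosh x)`. -/
private lemma whitham_u_pos {x : ℝ} (hx : 0 < x) : 0 < Real.sinh x / (x * Real.cosh x) :=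
  div_pos (Real.sinh_pos_iff.mpr hx) (mul_pos hx (Real.cosh_pos x))

private lemma whitham_hasDerivAt_u {x : ℝ} (hx : 0 < x) :
    HasDerivAt (fun y => Real.sinh y / (y * Real.cosh y))
      ((x - Real.sinh x * Real.cosh x) / (x * Real.cosh x) ^ 2) x := by
  have hne : x * Real.cosh x ≠ 0 := by positivity
  have h := (Real.hasDerivAt_sinh x).fun_div ((hasDerivAt_id' x).fun_mul (Real.hasDerivAt_cosh x)) hne
  refine h.congr_deriv (Eq.symm ?_); congr 1
  linear_combination (-x) * Real.cosh_sq_sub_sinh_sq x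

private lemma whitham_hasDerivAt_q {x : ℝ} (hx : 0 < x) :
    HasDerivAt (fun y => (y - Real.sinh y * Real.cosh y) / (y * Real.cosh y) ^ 2)
      (((-2 * Real.sinh x ^ 2) * (x * Real.cosh x) ^ 2 -
        (x - Real.sinh x * Real.cosh x) * (2 * (x * Real.cosh x) * (Real.cosh x + x * Real.sinh x)))
        / ((x * Real.cosh x) ^ 2) ^ 2) x := by
  have hne : (x * Real.cosh x) ^ 2 ≠ 0 := by positivity
  have h := ((hasDerivAt_id' x).fun_sub ((Real.hasDerivAt_sinh x).fun_mul (Real.hasDerivAt_cosh x))).fun_div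
    (((hasDerivAt_id' x).fun_mul (Real.hasDerivAt_cosh x)).fun_pow 2) hne
  refine h.congr_deriv (Eq.symm ?_); congr 1
  push_cast
  linear_combination ((x * Real.cosh x) ^ 2) * Real.cosh_sq_sub_sinh_sq x

/-- The first derivative function of the Whitham symbol (valid on `(0,∞)`). -/
private noncomputable def whithamD1 (x : ℝ) : ℝ :=
  ((x - Real.sinh x * Real.cosh x) / (x * Real.cosh x) ^ 2) /
    (2 * Real.sqrt (Real.sinh x / (x * Real.cosh x)))

private lemma whitham_eventuallyEq {x : ℝ} (hx : 0 < x) :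
    whithamSymbol =ᶠ[nhds x] fun y => Real.sqrt (Real.sinh y / (y * Real.cosh y)) := by
  filter_upwards [eventually_gt_nhds hx] with y hy
  have hy0 : y ≠ 0 := ne_of_gt hy
  rw [whithamSymbol, if_neg hy0, Real.tanh_eq_sinh_div_cosh, div_div, mul_comm]

private lemma whitham_hasDerivAt {x : ℝ} (hx : 0 < x) :
    HasDerivAt whithamSymbol (whithamD1 x) x := by
  have h := (whitham_hasDerivAt_u hx).sqrt (ne_of_gt (whitham_u_pos hx))
  exact h.congr_of_eventuallyEq (whitham_eventuallyEq hx)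

private lemma whitham_key (κ c s : ℝ) (hκ : 0 < κ) (hc : 0 < c) (hs : 0 < s) :
    2 * (((κ - s ^ 2 * κ * c * c) / (κ * c) ^ 2) / (2 * s)) +
      κ * (((((-2 * (s ^ 2 * κ * c) ^ 2) * (κ * c) ^ 2 -
          (κ - s ^ 2 * κ * c * c) * (2 * (κ * c) * (c + κ * (s ^ 2 * κ * c))))
            / ((κ * c) ^ 2) ^ 2) * (2 * s) -
          ((κ - s ^ 2 * κ * c * c) / (κ * c) ^ 2) *
            (2 * (((κ - s ^ 2 * κ * c * c) / (κ * c) ^ 2) / (2 * s)))) / (2 * s) ^ 2) < 0 := by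
  have hκ' := hκ.ne'
  have hc' := hc.ne'
  have hs' := hs.ne'
  have e : 2 * (((κ - s ^ 2 * κ * c * c) / (κ * c) ^ 2) / (2 * s)) +
      κ * (((((-2 * (s ^ 2 * κ * c) ^ 2) * (κ * c) ^ 2 -
          (κ - s ^ 2 * κ * c * c) * (2 * (κ * c) * (c + κ * (s ^ 2 * κ * c))))
            / ((κ * c) ^ 2) ^ 2) * (2 * s) -
          ((κ - s ^ 2 * κ * c * c) / (κ * c) ^ 2) *
            (2 * (((κ - s ^ 2 * κ * c * c) / (κ * c) ^ 2) / (2 * s)))) / (2 * s) ^ 2)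
      = -(((4 * (s ^ 2 * κ * c) ^ 2 * κ ^ 2 + (κ - s ^ 2 * κ * c * c) ^ 2) * s) /
          (4 * (s ^ 2 * κ * c) ^ 2 * κ * c ^ 2)) := by
    field_simp
    ring
  rw [e, neg_lt, neg_zero]
  positivity

theorem whithamSymbol_kappa_mul_sub_one_strictConcave (κ : ℝ) (hκ : 0 < κ) :
    2 * deriv whithamSymbol κ + κ * deriv (deriv whithamSymbol) κ < 0 := by
  set s : ℝ := Real.sqrt (Real.sinh κ / (κ * Real.cosh κ)) with hs_def
  have hupos := whitham_u_pos hκ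
  have hs : 0 < s := Real.sqrt_pos.mpr hupos
  have hs2 : s ^ 2 = Real.sinh κ / (κ * Real.cosh κ) := Real.sq_sqrt hupos.le
  have hcκ : 0 < Real.cosh κ := Real.cosh_pos κ
  have hSval : Real.sinh κ = s ^ 2 * κ * Real.cosh κ := by
    rw [hs2]; field_simp
  -- first derivative
  have h1 : deriv whithamSymbol κ = whithamD1 κ := (whitham_hasDerivAt hκ).deriv
  -- the derivative agrees with whithamD1 near κ
  have ev2 : deriv whithamSymbol =ᶠ[nhds κ] whithamD1 := by
    filter_upwards [eventually_gt_nhds hκ] with y hy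
    exact (whitham_hasDerivAt hy).deriv
  -- second derivative via quotient rule on whithamD1
  have hrne : 2 * Real.sqrt (Real.sinh κ / (κ * Real.cosh κ)) ≠ 0 := by positivity
  have hr : HasDerivAt (fun y => 2 * Real.sqrt (Real.sinh y / (y * Real.cosh y)))
      (2 * (((κ - Real.sinh κ * Real.cosh κ) / (κ * Real.cosh κ) ^ 2) /
        (2 * Real.sqrt (Real.sinh κ / (κ * Real.cosh κ))))) κ :=
    ((whitham_hasDerivAt_u hκ).sqrt (ne_of_gt hupos)).const_mul 2
  have hD1 : HasDerivAt whithamD1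
      (((((-2 * Real.sinh κ ^ 2) * (κ * Real.cosh κ) ^ 2 -
        (κ - Real.sinh κ * Real.cosh κ) * (2 * (κ * Real.cosh κ) * (Real.cosh κ + κ * Real.sinh κ)))
        / ((κ * Real.cosh κ) ^ 2) ^ 2) * (2 * Real.sqrt (Real.sinh κ / (κ * Real.cosh κ))) -
        ((κ - Real.sinh κ * Real.cosh κ) / (κ * Real.cosh κ) ^ 2) *
          (2 * (((κ - Real.sinh κ * Real.cosh κ) / (κ * Real.cosh κ) ^ 2) /
            (2 * Real.sqrt (Real.sinh κ / (κ * Real.cosh κ)))))) /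
        (2 * Real.sqrt (Real.sinh κ / (κ * Real.cosh κ))) ^ 2) κ :=
    (whitham_hasDerivAt_q hκ).div hr hrne
  have h2 : deriv (deriv whithamSymbol) κ = deriv whithamD1 κ := ev2.deriv_eq
  rw [h1, h2, hD1.deriv]
  rw [whithamD1]
  rw [← hs_def, hSval]
  exact whitham_key κ (Real.cosh κ) s hκ hcκ hs
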